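/- arXiv:2112.06808 — 8 statements merged into one kernel-verified Lean document; each statement's English description precedes it below -/
import Mathlib

section
/- Consider the spatial delayed SIR model with Ω ⊂ ℝ² a bounded open connected set, parameters b, c, σ, δ > 0, final time 𝒯 > 0, and W : ℝ² → ℝ continuous, nonnegative and bounded. Suppose S, I, R : [−σ, 𝒯] × ℝ² → ℝ are such that I(t, ·) vanishes outside Ω for every t, the maps (t,x,y) ↦ S, I, R are continuous on [−σ, 𝒯] × Ω, and for every (x,y) ∈ Ω and t ∈ (0, 𝒯] the time derivatives exist and satisfy ∂ₜS(t,x,y) = −S(t,x,y)·F_I(t−σ,x,y) − c·S(t,x,y), ∂ₜI(t,x,y) = S(t,x,y)·F_I(t−σ,x,y) − b·I(t,x,y), ∂ₜR(t,x,y) = b·I(t,x,y) + c·S(t,x,y), where F_I(t,x,y) = ∫_{B_δ(x,y)} W(x',y')·I(t,x',y') d(x',y'). Assume the history satisfies, for every (x,y) ∈ Ω: S(t,x,y), I(t,x,y), R(t,x,y) ≥ 0 for all t ∈ [−σ,0]; t ↦ S(t,x,y)+I(t,x,y)+R(t,x,y) is constant on [−σ,0]; t ↦ S(t,x,y) is nonincreasing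 and t ↦ R(t,x,y) is nondecreasing on [−σ,0]. Then for every (x,y) ∈ Ω: S(t,x,y), I(t,x,y), R(t,x,y) ≥ 0 for all t ∈ [0,𝒯]; S(t,x,y)+I(t,x,y)+R(t,x,y) = S(0,x,y)+I(0,x,y)+R(0,x,y) for all t ∈ [0,𝒯]; t ↦ S(t,x,y) is nonincreasing on [0,𝒯]; and t ↦ R(t,x,y) is nondecreasing on [0,𝒯]. -/
open MeasureTheory

/-- Sign preservation: a continuous function with nonnegative derivative wherever it is
negative stays nonnegative. -/
lemma nonneg_of_deriv_nonneg_at_neg {f : ℝ → ℝ} {a b : ℝ}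
    (hc : ContinuousOn f (Set.Icc a b)) (h0 : 0 ≤ f a)
    (hd : ∀ t ∈ Set.Ioo a b, f t < 0 → ∃ g, HasDerivAt f g t ∧ 0 ≤ g) :
    ∀ t ∈ Set.Icc a b, 0 ≤ f t := by
  intro t1 ht1
  by_contra hneg
  push_neg at hneg
  have hat1 : a ≤ t1 := ht1.1
  set K := Set.Icc a t1 ∩ f ⁻¹' Set.Ici 0 with hK
  have hKcl : IsClosed K :=
    (hc.mono (Set.Icc_subset_Icc_right ht1.2)).preimage_isClosed_of_isClosed
      isClosed_Icc isClosed_Ici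
  have hKne : K.Nonempty := ⟨a, ⟨le_refl a, hat1⟩, h0⟩
  have hKbdd : BddAbove K := ⟨t1, fun x hx => hx.1.2⟩
  set t0 := sSup K with ht0
  have ht0K : t0 ∈ K := hKcl.csSup_mem hKne hKbdd
  have ht0le : t0 ≤ t1 := ht0K.1.2
  have ht0a : a ≤ t0 := ht0K.1.1
  have hf0 : 0 ≤ f t0 := ht0K.2
  have ht0lt : t0 < t1 := lt_of_le_of_ne ht0le (fun h => absurd hneg (not_lt.2 (h ▸ hf0)))
  have hneg' : ∀ t ∈ Set.Ioc t0 t1, f t < 0 := by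
    intro t ht
    by_contra h
    push_neg at h
    exact absurd (le_csSup hKbdd ⟨⟨ht0a.trans ht.1.le, ht.2⟩, h⟩) (not_le.2 ht.1)
  have hmono : MonotoneOn f (Set.Icc t0 t1) := by
    apply monotoneOn_of_deriv_nonneg (convex_Icc t0 t1)
      (hc.mono (Set.Icc_subset_Icc ht0a ht1.2))
    · rw [interior_Icc]
      intro t ht
      obtain ⟨g, hg, _⟩ := hd t ⟨ht0a.trans_lt ht.1, ht.2.trans_le ht1.2⟩
        (hneg' t ⟨ht.1, ht.2.le⟩)
      exact hg.differentiableAt.differentiableWithinAt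
    · rw [interior_Icc]
      intro t ht
      obtain ⟨g, hg, hg0⟩ := hd t ⟨ht0a.trans_lt ht.1, ht.2.trans_le ht1.2⟩
        (hneg' t ⟨ht.1, ht.2.le⟩)
      rw [hg.deriv]; exact hg0
  have := hmono ⟨le_refl t0, ht0le⟩ ⟨ht0le, le_refl t1⟩ ht0le
  linarith

theorem stmt_6
    (Ω : Set (EuclideanSpace ℝ (Fin 2)))
    (hΩo : IsOpen Ω) (hΩb : Bornology.IsBounded Ω) (hΩc : IsConnected Ω)
    (b c σ δ T : ℝ) (hb : 0 < b) (hc : 0 < c) (hσ : 0 < σ) (hδ : 0 < δ) (hT : 0 < T)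
    (W : EuclideanSpace ℝ (Fin 2) → ℝ)
    (hWc : Continuous W) (hWnn : ∀ z, 0 ≤ W z) (hWb : ∃ C, ∀ z, W z ≤ C)
    (S I R : ℝ → EuclideanSpace ℝ (Fin 2) → ℝ)
    (hIout : ∀ t, ∀ z ∉ Ω, I t z = 0)
    (hScont : ContinuousOn (fun p : ℝ × EuclideanSpace ℝ (Fin 2) => S p.1 p.2)
      (Set.Icc (-σ) T ×ˢ Ω))
    (hIcont : ContinuousOn (fun p : ℝ × EuclideanSpace ℝ (Fin 2) => I p.1 p.2)
      (Set.Icc (-σ) T ×ˢ Ω))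
    (hRcont : ContinuousOn (fun p : ℝ × EuclideanSpace ℝ (Fin 2) => R p.1 p.2)
      (Set.Icc (-σ) T ×ˢ Ω))
    (hdS : ∀ z ∈ Ω, ∀ t ∈ Set.Ioc 0 T,
      HasDerivWithinAt (fun t => S t z)
        (-(S t z) * (∫ z' in Metric.ball z δ, W z' * I (t - σ) z') - c * S t z)
        (Set.Icc (-σ) T) t)
    (hdI : ∀ z ∈ Ω, ∀ t ∈ Set.Ioc 0 T,
      HasDerivWithinAt (fun t => I t z)
        (S t z * (∫ z' in Metric.ball z δ, W z' * I (t - σ) z') - b * I t z)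
        (Set.Icc (-σ) T) t)
    (hdR : ∀ z ∈ Ω, ∀ t ∈ Set.Ioc 0 T,
      HasDerivWithinAt (fun t => R t z)
        (b * I t z + c * S t z) (Set.Icc (-σ) T) t)
    (hist_nn : ∀ z ∈ Ω, ∀ t ∈ Set.Icc (-σ) 0, 0 ≤ S t z ∧ 0 ≤ I t z ∧ 0 ≤ R t z)
    (hist_sum : ∀ z ∈ Ω, ∀ t ∈ Set.Icc (-σ) 0,
      S t z + I t z + R t z = S 0 z + I 0 z + R 0 z)
    (hist_S : ∀ z ∈ Ω, AntitoneOn (fun t => S t z) (Set.Icc (-σ) 0))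
    (hist_R : ∀ z ∈ Ω, MonotoneOn (fun t => R t z) (Set.Icc (-σ) 0)) :
    ∀ z ∈ Ω,
      (∀ t ∈ Set.Icc 0 T, 0 ≤ S t z ∧ 0 ≤ I t z ∧ 0 ≤ R t z) ∧
      (∀ t ∈ Set.Icc 0 T, S t z + I t z + R t z = S 0 z + I 0 z + R 0 z) ∧
      AntitoneOn (fun t => S t z) (Set.Icc 0 T) ∧
      MonotoneOn (fun t => R t z) (Set.Icc 0 T) := by
  -- single-variable continuity
  have hmap : ∀ z ∈ Ω, Set.MapsTo (fun t : ℝ => (t, z)) (Set.Icc (-σ) T)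
      (Set.Icc (-σ) T ×ˢ Ω) := fun z hz t ht => ⟨ht, hz⟩
  have Scont : ∀ z ∈ Ω, ContinuousOn (fun t => S t z) (Set.Icc (-σ) T) := fun z hz =>
    hScont.comp ((continuous_id.prodMk continuous_const).continuousOn) (hmap z hz)
  have Icont : ∀ z ∈ Ω, ContinuousOn (fun t => I t z) (Set.Icc (-σ) T) := fun z hz =>
    hIcont.comp ((continuous_id.prodMk continuous_const).continuousOn) (hmap z hz)
  have Rcont : ∀ z ∈ Ω, ContinuousOn (fun t => R t z) (Set.Icc (-σ) T) := fun z hz =>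
    hRcont.comp ((continuous_id.prodMk continuous_const).continuousOn) (hmap z hz)
  -- unrestricted derivatives at interior points
  have hnhds : ∀ t ∈ Set.Ioo (0:ℝ) T, Set.Icc (-σ) T ∈ nhds t := fun t ht =>
    Icc_mem_nhds (by linarith [ht.1]) ht.2
  have hdS' : ∀ z ∈ Ω, ∀ t ∈ Set.Ioo (0:ℝ) T,
      HasDerivAt (fun t => S t z)
        (-(S t z) * (∫ z' in Metric.ball z δ, W z' * I (t - σ) z') - c * S t z) t :=
    fun z hz t ht => (hdS z hz t ⟨ht.1, ht.2.le⟩).hasDerivAt (hnhds t ht)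
  have hdI' : ∀ z ∈ Ω, ∀ t ∈ Set.Ioo (0:ℝ) T,
      HasDerivAt (fun t => I t z)
        (S t z * (∫ z' in Metric.ball z δ, W z' * I (t - σ) z') - b * I t z) t :=
    fun z hz t ht => (hdI z hz t ⟨ht.1, ht.2.le⟩).hasDerivAt (hnhds t ht)
  have hdR' : ∀ z ∈ Ω, ∀ t ∈ Set.Ioo (0:ℝ) T,
      HasDerivAt (fun t => R t z) (b * I t z + c * S t z) t :=
    fun z hz t ht => (hdR z hz t ⟨ht.1, ht.2.le⟩).hasDerivAt (hnhds t ht)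
  -- key induction on delay intervals
  have key : ∀ n : ℕ, ∀ z ∈ Ω, ∀ t ∈ Set.Icc (-σ) (min ((n : ℝ) * σ) T),
      0 ≤ S t z ∧ 0 ≤ I t z := by
    intro n
    induction n with
    | zero =>
      intro z hz t ht
      have h0 : min ((0 : ℕ) * σ : ℝ) T = 0 := by
        push_cast; rw [zero_mul]; exact min_eq_left hT.le
      rw [h0] at ht
      exact ⟨(hist_nn z hz t ht).1, (hist_nn z hz t ht).2.1⟩
    | succ n ih =>
      by_cases hcase : T ≤ (n : ℝ) * σ
      · intro z hz t ht
        apply ih z hz t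
        rw [min_eq_right hcase]
        refine ⟨ht.1, ?_⟩
        have := ht.2
        rw [min_eq_right (by push_cast; nlinarith)] at this
        exact this
      · push_neg at hcase
        set a := (n : ℝ) * σ with ha
        set bn := min (((n : ℕ) + 1 : ℝ) * σ) T with hbn
        have hmin : min a T = a := min_eq_left hcase.le
        have ha0 : 0 ≤ a := mul_nonneg n.cast_nonneg hσ.le
        have hab : a ≤ bn := le_min (by nlinarith) hcase.le
        have hbnT : bn ≤ T := min_le_right _ _
        have hbnσ : bn ≤ ((n : ℝ) + 1) * σ := min_le_left _ _
        -- the delayed integral is nonnegative on (a, bn]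
        have F_nn : ∀ z, ∀ t ∈ Set.Ioo a bn,
            0 ≤ ∫ z' in Metric.ball z δ, W z' * I (t - σ) z' := by
          intro z t ht
          apply setIntegral_nonneg measurableSet_ball
          intro z' _
          apply mul_nonneg (hWnn z')
          by_cases hz' : z' ∈ Ω
          · refine (ih z' hz' (t - σ) ⟨by linarith [ht.1], ?_⟩).2
            rw [hmin]
            linarith [ht.2, hbnσ]
          · rw [hIout _ _ hz']
        intro z hz
        have hsub : Set.Icc a bn ⊆ Set.Icc (-σ) T :=
          Set.Icc_subset_Icc (by linarith) hbnT
        have haIcc : a ∈ Set.Icc (-σ) (min a T) := ⟨by linarith, by rw [hmin]⟩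
        -- S is nonnegative on [a, bn]
        have hSnn : ∀ t ∈ Set.Icc a bn, 0 ≤ S t z := by
          apply nonneg_of_deriv_nonneg_at_neg ((Scont z hz).mono hsub)
            (ih z hz a haIcc).1
          intro t ht hneg
          have htT : t ∈ Set.Ioo (0:ℝ) T :=
            ⟨lt_of_le_of_lt ha0 ht.1, lt_of_lt_of_le ht.2 hbnT⟩
          refine ⟨_, hdS' z hz t htT, ?_⟩
          have hF := F_nn z t ht
          nlinarith
        -- I is nonnegative on [a, bn]
        have hInn : ∀ t ∈ Set.Icc a bn, 0 ≤ I t z := by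
          apply nonneg_of_deriv_nonneg_at_neg ((Icont z hz).mono hsub)
            (ih z hz a haIcc).2
          intro t ht hneg
          have htT : t ∈ Set.Ioo (0:ℝ) T :=
            ⟨lt_of_le_of_lt ha0 ht.1, lt_of_lt_of_le ht.2 hbnT⟩
          refine ⟨_, hdI' z hz t htT, ?_⟩
          have hF := F_nn z t ht
          have hS := hSnn t ⟨ht.1.le, ht.2.le⟩
          nlinarith
        intro t ht
        have ht2 : t ≤ bn := by
          have := ht.2
          rwa [show ((n + 1 : ℕ) : ℝ) * σ = ((n : ℕ) + 1 : ℝ) * σ by push_cast; ring] at this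
        by_cases hta : t ≤ a
        · exact ih z hz t ⟨ht.1, by rw [hmin]; exact hta⟩
        · push_neg at hta
          exact ⟨hSnn t ⟨hta.le, ht2⟩, hInn t ⟨hta.le, ht2⟩⟩
  -- global nonnegativity of S and I on [-σ, T]
  obtain ⟨n, hn⟩ : ∃ n : ℕ, T ≤ (n : ℝ) * σ :=
    ⟨⌈T / σ⌉₊, by rw [← div_le_iff₀ hσ]; exact Nat.le_ceil _⟩
  have keyT : ∀ z ∈ Ω, ∀ t ∈ Set.Icc (-σ) T, 0 ≤ S t z ∧ 0 ≤ I t z := by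
    intro z hz t ht
    exact key n z hz t ⟨ht.1, by rw [min_eq_right hn]; exact ht.2⟩
  -- the delayed integral is nonnegative everywhere relevant
  have Fnn : ∀ z, ∀ t ∈ Set.Ioo (0:ℝ) T,
      0 ≤ ∫ z' in Metric.ball z δ, W z' * I (t - σ) z' := by
    intro z t ht
    apply setIntegral_nonneg measurableSet_ball
    intro z' _
    apply mul_nonneg (hWnn z')
    by_cases hz' : z' ∈ Ω
    · exact (keyT z' hz' (t - σ) ⟨by linarith [ht.1], by linarith [ht.2]⟩).2
    · rw [hIout _ _ hz']
  intro z hz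
  have hsub0 : Set.Icc (0:ℝ) T ⊆ Set.Icc (-σ) T := Set.Icc_subset_Icc (by linarith) le_rfl
  have hSnn : ∀ t ∈ Set.Icc (0:ℝ) T, 0 ≤ S t z := fun t ht =>
    (keyT z hz t (hsub0 ht)).1
  have hInn : ∀ t ∈ Set.Icc (0:ℝ) T, 0 ≤ I t z := fun t ht =>
    (keyT z hz t (hsub0 ht)).2
  -- R is monotone
  have hRmono : MonotoneOn (fun t => R t z) (Set.Icc 0 T) := by
    apply monotoneOn_of_deriv_nonneg (convex_Icc 0 T) ((Rcont z hz).mono hsub0)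
    · rw [interior_Icc]
      intro t ht
      exact (hdR' z hz t ht).differentiableAt.differentiableWithinAt
    · rw [interior_Icc]
      intro t ht
      rw [(hdR' z hz t ht).deriv]
      have h1 := hInn t ⟨ht.1.le, ht.2.le⟩
      have h2 := hSnn t ⟨ht.1.le, ht.2.le⟩
      nlinarith
  -- S is antitone
  have hSanti : AntitoneOn (fun t => S t z) (Set.Icc 0 T) := by
    apply antitoneOn_of_deriv_nonpos (convex_Icc 0 T) ((Scont z hz).mono hsub0)
    · rw [interior_Icc]
      intro t ht
      exact (hdS' z hz t ht).differentiableAt.differentiableWithinAt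
    · rw [interior_Icc]
      intro t ht
      rw [(hdS' z hz t ht).deriv]
      have h1 := hSnn t ⟨ht.1.le, ht.2.le⟩
      have h2 := Fnn z t ht
      nlinarith
  -- total population is constant
  have hNderiv : ∀ t ∈ Set.Ioo (0:ℝ) T,
      HasDerivAt (fun t => S t z + I t z + R t z) 0 t := by
    intro t ht
    have h := ((hdS' z hz t ht).add (hdI' z hz t ht)).add (hdR' z hz t ht)
    exact h.congr_deriv (by ring)
  have hNcont : ContinuousOn (fun t => S t z + I t z + R t z) (Set.Icc 0 T) :=
    (((Scont z hz).add (Icont z hz)).add (Rcont z hz)).mono hsub0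
  have hNmono : MonotoneOn (fun t => S t z + I t z + R t z) (Set.Icc 0 T) := by
    apply monotoneOn_of_deriv_nonneg (convex_Icc 0 T) hNcont
    · rw [interior_Icc]
      intro t ht
      exact (hNderiv t ht).differentiableAt.differentiableWithinAt
    · rw [interior_Icc]
      intro t ht
      rw [(hNderiv t ht).deriv]
  have hNanti : AntitoneOn (fun t => S t z + I t z + R t z) (Set.Icc 0 T) := by
    apply antitoneOn_of_deriv_nonpos (convex_Icc 0 T) hNcont
    · rw [interior_Icc]
      intro t ht
      exact (hNderiv t ht).differentiableAt.differentiableWithinAt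
    · rw [interior_Icc]
      intro t ht
      rw [(hNderiv t ht).deriv]
  have h0mem : (0:ℝ) ∈ Set.Icc (0:ℝ) T := ⟨le_rfl, hT.le⟩
  have hR0 : 0 ≤ R 0 z := (hist_nn z hz 0 ⟨by linarith, le_rfl⟩).2.2
  refine ⟨fun t ht => ⟨hSnn t ht, hInn t ht, ?_⟩, fun t ht => ?_, hSanti, hRmono⟩
  · exact le_trans hR0 (hRmono h0mem ht ht.1)
  · exact le_antisymm (hNanti h0mem ht ht.1) (hNmono h0mem ht ht.1)
end

section
/- Let G be a finite index set, let τ > 0, b ≥ 0, c ≥ 0, and let Sⁿ, Iⁿ, Rⁿ, T : G → ℝ satisfy Sⁿ(g) ≥ 0, Iⁿ(g) ≥ 0, Rⁿ(g) ≥ 0 and T(g) ≥ 0 for all g ∈ G. Define S^{n+1}(g) = Sⁿ(g) − τ·Sⁿ(g)·T(g) − c·τ·Sⁿ(g), I^{n+1}(g) = Iⁿ(g) + τ·Sⁿ(g)·T(g) − b·τ·Iⁿ(g), R^{n+1}(g) = Rⁿ(g) + b·τ·Iⁿ(g) + c·τ·Sⁿ(g). If τ·(T(g) + c) ≤ 1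 for every g ∈ G and τ·b ≤ 1, then for every g ∈ G: S^{n+1}(g) ≥ 0, I^{n+1}(g) ≥ 0, R^{n+1}(g) ≥ 0, S^{n+1}(g) ≤ Sⁿ(g), and R^{n+1}(g) ≥ Rⁿ(g). -/
/-!
Each update is linear in the old values with coefficients that the step-size restrictions make
nonnegative: `S' = S (1 - τ (T + c))`, `I' = I (1 - τ b) + τ S T`, while `S'` and `R'` differ from `S` and `R`
only by the nonnegative fluxes `τ S T`, `c τ S` and `b τ I`.
-/

section EulerSIRStep

variable {τ b c s i r t : ℝ}

lemma euler_susceptible_nonneg (hs : 0 ≤ s) (h : τ * (t + c) ≤ 1) :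
    0 ≤ s - τ * s * t - c * τ * s := by
  have : s - τ * s * t - c * τ * s = s * (1 - τ * (t + c)) := by ring
  rw [this]
  exact mul_nonneg hs (sub_nonneg.2 h)

lemma euler_infected_nonneg (hτ : 0 ≤ τ) (hs : 0 ≤ s) (hi : 0 ≤ i) (ht : 0 ≤ t)
    (h : τ * b ≤ 1) : 0 ≤ i + τ * s * t - b * τ * i := by
  have : i + τ * s * t - b * τ * i = i * (1 - τ * b) + τ * s * t := by ring
  rw [this]
  exact add_nonneg (mul_nonneg hi (sub_nonneg.2 h)) (by positivity)

lemma euler_susceptible_le (hτ : 0 ≤ τ) (hc : 0 ≤ c) (hs : 0 ≤ s) (ht : 0 ≤ t) :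
    s - τ * s * t - c * τ * s ≤ s := by
  have : 0 ≤ τ * s * t := by positivity
  have : 0 ≤ c * τ * s := by positivity
  linarith

lemma le_euler_recovered (hτ : 0 ≤ τ) (hb : 0 ≤ b) (hc : 0 ≤ c) (hs : 0 ≤ s) (hi : 0 ≤ i) :
    r ≤ r + b * τ * i + c * τ * s := by
  have : 0 ≤ b * τ * i := by positivity
  have : 0 ≤ c * τ * s := by positivity
  linarith

end EulerSIRStep

theorem stmt_9_general {G : Type*} (τ b c : ℝ)
    (hτ : 0 < τ) (hb : 0 ≤ b) (hc : 0 ≤ c)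
    (S I R T S' I' R' : G → ℝ)
    (hSnn : ∀ g, 0 ≤ S g) (hInn : ∀ g, 0 ≤ I g) (hRnn : ∀ g, 0 ≤ R g)
    (hTnn : ∀ g, 0 ≤ T g)
    (hS' : ∀ g, S' g = S g - τ * S g * T g - c * τ * S g)
    (hI' : ∀ g, I' g = I g + τ * S g * T g - b * τ * I g)
    (hR' : ∀ g, R' g = R g + b * τ * I g + c * τ * S g)
    (hcond : ∀ g, τ * (T g + c) ≤ 1) (hcondb : τ * b ≤ 1) :
    ∀ g, 0 ≤ S' g ∧ 0 ≤ I' g ∧ 0 ≤ R' g ∧ S' g ≤ S g ∧ R g ≤ R' g := by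
  intro g
  have hR_le : R g ≤ R' g := hR' g ▸ le_euler_recovered hτ.le hb hc (hSnn g) (hInn g)
  refine ⟨?_, ?_, (hRnn g).trans hR_le, ?_, hR_le⟩
  · exact hS' g ▸ euler_susceptible_nonneg (hSnn g) (hcond g)
  · exact hI' g ▸ euler_infected_nonneg hτ.le (hSnn g) (hInn g) (hTnn g) hcondb
  · exact hS' g ▸ euler_susceptible_le hτ.le hc (hSnn g) (hTnn g)

theorem stmt_9 {G : Type*} [Fintype G] (τ b c : ℝ)
    (hτ : 0 < τ) (hb : 0 ≤ b) (hc : 0 ≤ c)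
    (S I R T S' I' R' : G → ℝ)
    (hSnn : ∀ g, 0 ≤ S g) (hInn : ∀ g, 0 ≤ I g) (hRnn : ∀ g, 0 ≤ R g)
    (hTnn : ∀ g, 0 ≤ T g)
    (hS' : ∀ g, S' g = S g - τ * S g * T g - c * τ * S g)
    (hI' : ∀ g, I' g = I g + τ * S g * T g - b * τ * I g)
    (hR' : ∀ g, R' g = R g + b * τ * I g + c * τ * S g)
    (hcond : ∀ g, τ * (T g + c) ≤ 1) (hcondb : τ * b ≤ 1) :
    ∀ g, 0 ≤ S' g ∧ 0 ≤ I' g ∧ 0 ≤ R' g ∧ S' g ≤ S g ∧ R g ≤ R' g :=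
  stmt_9_general τ b c hτ hb hc S I R T S' I' R' hSnn hInn hRnn hTnn hS' hI' hR' hcond hcondb
end

section
/- Let G be a finite index set, m a positive integer, σ > 0, τ = σ/m, and b, c > 0. Let M ≥ 0 and T̄ ≥ 0, and let Φ : (G → ℝ) → (G → ℝ) be a map such that whenever X : G → ℝ satisfies 0 ≤ X(g) ≤ M for all g ∈ G, then 0 ≤ Φ(X)(g) ≤ T̄ for all g ∈ G. Let Sⁿ, Iⁿ, Rⁿ : G → ℝ be defined for all integers n ≥ −m, satisfying for all n ≥ 0 the explicit Euler scheme S^{n+1}(g) = Sⁿ(g) − τ·Sⁿ(g)·Φ(I^{n−m})(g) − c·τ·Sⁿ(g), I^{n+1}(g) = Iⁿ(g) + τ·Sⁿ(g)·Φ(I^{n−m})(g) − b·τ·Iⁿ(g), R^{n+1}(g) = Rⁿ(g) + b·τ·Iⁿ(g) + c·τ·Sⁿ(g). Assume the history satisfies, for all −m ≤ n ≤ 0 and all g ∈ G: Sⁿ(g) ≥ 0, Iⁿ(g) ≥ 0, Rⁿ(g) ≥ 0 and Sⁿ(g) + Iⁿ(g) + Rⁿ(g) = S⁰(g) + I⁰(g)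 + R⁰(g), and that S⁰(g) + I⁰(g) + R⁰(g) ≤ M for all g ∈ G. If τ ≤ min(1/(T̄ + c), 1/b), then for every n ≥ 0 and every g ∈ G: Sⁿ(g) ≥ 0, Iⁿ(g) ≥ 0, Rⁿ(g) ≥ 0; Sⁿ(g) + Iⁿ(g) + Rⁿ(g) = S⁰(g) + I⁰(g) + R⁰(g); S^{n+1}(g) ≤ Sⁿ(g); and R^{n+1}(g) ≥ Rⁿ(g). -/
theorem stmt_10 {G : Type*} [Fintype G] (m : ℕ) (hm : 0 < m) (σ τ b c : ℝ)
    (hσ : 0 < σ) (hτdef : τ = σ / m) (hb : 0 < b) (hc : 0 < c)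
    (M Tbar : ℝ) (hM : 0 ≤ M) (hTbar : 0 ≤ Tbar)
    (Φ : (G → ℝ) → (G → ℝ))
    (hΦ : ∀ X : G → ℝ, (∀ g, 0 ≤ X g ∧ X g ≤ M) → ∀ g, 0 ≤ Φ X g ∧ Φ X g ≤ Tbar)
    (S I R : ℤ → G → ℝ)
    (hSstep : ∀ n : ℤ, 0 ≤ n → ∀ g,
      S (n + 1) g = S n g - τ * S n g * Φ (I (n - m)) g - c * τ * S n g)
    (hIstep : ∀ n : ℤ, 0 ≤ n → ∀ g,
      I (n + 1) g = I n g + τ * S n g * Φ (I (n - m)) g - b * τ * I n g)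
    (hRstep : ∀ n : ℤ, 0 ≤ n → ∀ g,
      R (n + 1) g = R n g + b * τ * I n g + c * τ * S n g)
    (hist_nn : ∀ n : ℤ, -(m : ℤ) ≤ n → n ≤ 0 → ∀ g,
      0 ≤ S n g ∧ 0 ≤ I n g ∧ 0 ≤ R n g)
    (hist_sum : ∀ n : ℤ, -(m : ℤ) ≤ n → n ≤ 0 → ∀ g,
      S n g + I n g + R n g = S 0 g + I 0 g + R 0 g)
    (hM0 : ∀ g, S 0 g + I 0 g + R 0 g ≤ M)
    (hτ : τ ≤ min (1 / (Tbar + c)) (1 / b)) :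
    ∀ n : ℤ, 0 ≤ n → ∀ g,
      (0 ≤ S n g ∧ 0 ≤ I n g ∧ 0 ≤ R n g) ∧
      S n g + I n g + R n g = S 0 g + I 0 g + R 0 g ∧
      S (n + 1) g ≤ S n g ∧ R n g ≤ R (n + 1) g := by
  have hmpos : (0:ℝ) < m := by exact_mod_cast hm
  have hτpos : 0 < τ := by rw [hτdef]; positivity
  have hTc : 0 < Tbar + c := by linarith
  have hτ1 : τ * (Tbar + c) ≤ 1 := by
    have h1 : τ ≤ 1 / (Tbar + c) := le_trans hτ (min_le_left _ _)
    rw [le_div_iff₀ hTc] at h1; linarith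
  have hτ2 : τ * b ≤ 1 := by
    have h1 : τ ≤ 1 / b := le_trans hτ (min_le_right _ _)
    rw [le_div_iff₀ hb] at h1; linarith
  have key : ∀ n : ℤ, 0 ≤ n → ∀ k : ℤ, 0 ≤ k → k ≤ n → ∀ g,
      (0 ≤ S k g ∧ 0 ≤ I k g ∧ 0 ≤ R k g) ∧
      S k g + I k g + R k g = S 0 g + I 0 g + R 0 g := by
    intro n hn
    refine Int.le_induction (motive := fun n _ => ∀ k : ℤ, 0 ≤ k → k ≤ n → ∀ g,
        (0 ≤ S k g ∧ 0 ≤ I k g ∧ 0 ≤ R k g) ∧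
        S k g + I k g + R k g = S 0 g + I 0 g + R 0 g) ?_ ?_ n hn
    · intro k hk hk0
      have hk00 : k = 0 := le_antisymm hk0 hk
      subst hk00
      intro g
      exact ⟨hist_nn 0 (by omega) le_rfl g, rfl⟩
    · intro n hn ih
      intro k hk hkn g
      rcases lt_or_eq_of_le hkn with h | h
      · exact ih k hk (by omega) g
      · subst h
        have hIj : ∀ g, 0 ≤ I (n - m) g ∧ I (n - m) g ≤ M := by
          intro g'
          rcases le_or_gt (n - m) 0 with h' | h'
          · obtain ⟨hS', hI', hR'⟩ := hist_nn (n - m) (by omega) h' g'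
            have hs := hist_sum (n - m) (by omega) h' g'
            have := hM0 g'
            exact ⟨hI', by linarith⟩
          · obtain ⟨⟨hS', hI', hR'⟩, hs⟩ := ih (n - m) (by omega) (by omega) g'
            have := hM0 g'
            exact ⟨hI', by linarith⟩
        obtain ⟨hΦ0, hΦT⟩ := hΦ _ hIj g
        obtain ⟨⟨hS, hI, hR⟩, hsum⟩ := ih n hn le_rfl g
        have hSe := hSstep n hn g
        have hIe := hIstep n hn g
        have hRe := hRstep n hn g
        have hSnn : 0 ≤ S (n + 1) g := by
          rw [hSe]
          have : τ * Φ (I (n - ↑m)) g + c * τ ≤ 1 := by nlinarith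
          nlinarith [mul_nonneg hS (sub_nonneg.mpr this)]
        have hInn : 0 ≤ I (n + 1) g := by
          rw [hIe]
          have h1 : 0 ≤ 1 - b * τ := by nlinarith
          nlinarith [mul_nonneg hI h1, mul_nonneg (mul_nonneg hτpos.le hS) hΦ0]
        have hRnn : 0 ≤ R (n + 1) g := by
          rw [hRe]
          nlinarith [mul_nonneg (mul_nonneg hb.le hτpos.le) hI,
            mul_nonneg (mul_nonneg hc.le hτpos.le) hS]
        refine ⟨⟨hSnn, hInn, hRnn⟩, ?_⟩
        rw [hSe, hIe, hRe]; linarith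
  intro n hn g
  obtain ⟨⟨hS, hI, hR⟩, hsum⟩ := key n hn n hn le_rfl g
  have hIj : ∀ g, 0 ≤ I (n - m) g ∧ I (n - m) g ≤ M := by
    intro g'
    rcases le_or_gt (n - m) 0 with h' | h'
    · obtain ⟨hS', hI', hR'⟩ := hist_nn (n - m) (by omega) h' g'
      have hs := hist_sum (n - m) (by omega) h' g'
      have := hM0 g'
      exact ⟨hI', by linarith⟩
    · obtain ⟨⟨hS', hI', hR'⟩, hs⟩ := key n hn (n - m) (by omega) (by omega) g'
      have := hM0 g'
      exact ⟨hI', by linarith⟩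
  obtain ⟨hΦ0, hΦT⟩ := hΦ _ hIj g
  refine ⟨⟨hS, hI, hR⟩, hsum, ?_, ?_⟩
  · rw [hSstep n hn g]
    have h1 : 0 ≤ τ * S n g * Φ (I (n - ↑m)) g :=
      mul_nonneg (mul_nonneg hτpos.le hS) hΦ0
    have h2 : 0 ≤ c * τ * S n g := mul_nonneg (mul_nonneg hc.le hτpos.le) hS
    linarith
  · rw [hRstep n hn g]
    have h1 : 0 ≤ b * τ * I n g := mul_nonneg (mul_nonneg hb.le hτpos.le) hI
    have h2 : 0 ≤ c * τ * S n g := mul_nonneg (mul_nonneg hc.le hτpos.le) hS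
    linarith
end

section
/- Let s be a natural number, and let v : {1,…,s+1} → ℝ and α : {1,…,s+1} × {1,…,s+1} → ℝ satisfy v_i ≥ 0 and α_{ij} ≥ 0 for all i and all j < i, together with the consistency condition v_i + Σ_{j<i} α_{ij} = 1 for every i. Let x₀ ∈ ℝ and let x : {1,…,s+1} → ℝ satisfy x_i ≤ v_i·x₀ + Σ_{j<i} α_{ij}·x_j for every i. Then x_i ≤ x₀ for every i ∈ {1,…,s+1}. -/
theorem mul_add_sum_mul_le_of_le {ι R : Type*} [Semiring R] [PartialOrder R] [IsOrderedRing R]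
    (t : Finset ι) {v x₀ : R} {a y : ι → R} (ha : ∀ j ∈ t, 0 ≤ a j)
    (hy : ∀ j ∈ t, y j ≤ x₀) (hsum : v + ∑ j ∈ t, a j = 1) :
    v * x₀ + ∑ j ∈ t, a j * y j ≤ x₀ :=
  calc v * x₀ + ∑ j ∈ t, a j * y j ≤ v * x₀ + ∑ j ∈ t, a j * x₀ := by
        gcongr with j hj
        · exact ha j hj
        · exact hy j hj
    _ = x₀ := by rw [← Finset.sum_mul, ← add_mul, hsum, one_mul]

theorem le_of_forall_le_mul_add_sum_Iio_mul {ι R : Type*} [Preorder ι] [LocallyFiniteOrderBot ι]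
    [WellFoundedLT ι]
    [Semiring R] [PartialOrder R] [IsOrderedRing R]
    {v : ι → R} {α : ι → ι → R} (hα : ∀ i j, j < i → 0 ≤ α i j)
    (hcons : ∀ i, v i + ∑ j ∈ Finset.Iio i, α i j = 1) {x₀ : R} {x : ι → R}
    (hx : ∀ i, x i ≤ v i * x₀ + ∑ j ∈ Finset.Iio i, α i j * x j) (i : ι) : x i ≤ x₀ := by
  induction i using WellFoundedLT.induction with
  | _ i ih =>
    refine (hx i).trans (mul_add_sum_mul_le_of_le _ (fun j hj => ?_) (fun j hj => ?_) (hcons i))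
    · exact hα i j (Finset.mem_Iio.mp hj)
    · exact ih j (Finset.mem_Iio.mp hj)

theorem stmt_12_general (s : ℕ) (v : Fin (s + 1) → ℝ) (α : Fin (s + 1) → Fin (s + 1) → ℝ)
    (hα : ∀ i j, j < i → 0 ≤ α i j)
    (hcons : ∀ i, v i + ∑ j ∈ Finset.Iio i, α i j = 1)
    (x₀ : ℝ) (x : Fin (s + 1) → ℝ)
    (hx : ∀ i, x i ≤ v i * x₀ + ∑ j ∈ Finset.Iio i, α i j * x j) :
    ∀ i, x i ≤ x₀ :=
  le_of_forall_le_mul_add_sum_Iio_mul hα hcons hx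

theorem stmt_12 (s : ℕ) (v : Fin (s + 1) → ℝ) (α : Fin (s + 1) → Fin (s + 1) → ℝ)
    (hv : ∀ i, 0 ≤ v i) (hα : ∀ i j, j < i → 0 ≤ α i j)
    (hcons : ∀ i, v i + ∑ j ∈ Finset.Iio i, α i j = 1)
    (x₀ : ℝ) (x : Fin (s + 1) → ℝ)
    (hx : ∀ i, x i ≤ v i * x₀ + ∑ j ∈ Finset.Iio i, α i j * x j) :
    ∀ i, x i ≤ x₀ :=
  stmt_12_general s v α hα hcons x₀ x hx
end

section
/- Let s be a natural number, let v : {1,…,s+1} → ℝ and α : {1,…,s+1} × {1,…,s+1} → ℝ satisfy v_i ≥ 0, α_{ij} ≥ 0 (for j < i) and v_i + Σ_{j<i} α_{ij} = 1 for every i. Let b ≥ 0, c ≥ 0, T ≥ 0, h > 0 with h·(T + c) ≤ 1 and h·b ≤ 1, and let S⁰ ≥ 0, I⁰ ≥ 0, R⁰ ≥ 0 be real numbers. Define stage values by S_(i) = v_i·S⁰ + Σ_{j<i} α_{ij}·(S_(j) − h·(S_(j)·T + c·S_(j))), I_(i) = v_i·I⁰ + Σ_{j<i} α_{ij}·(I_(j)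 + h·(S_(j)·T − b·I_(j))), R_(i) = v_i·R⁰ + Σ_{j<i} α_{ij}·(R_(j) + h·(b·I_(j) + c·S_(j))) for i = 1,…,s+1. Then S_(i) ≥ 0, I_(i) ≥ 0 and R_(i) ≥ 0 for every i ∈ {1,…,s+1}. -/
/-!
A Shu–Osher stage is a combination, with nonnegative weights, of the initial value and of
forward Euler steps applied to earlier stages. So if the forward Euler step with step size
`h` preserves the nonnegative cone, strong induction over the stages shows that every stage
is nonnegative. For the SIR right-hand side the forward Euler step is nonnegative
under the step-size restrictions `h (T + c) ≤ 1` and `h b ≤ 1`.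
-/

open Finset

theorem shuOsher_stage_nonneg {ι E : Type*} [LinearOrder ι] [LocallyFiniteOrderBot ι]
    [WellFoundedLT ι] [AddCommGroup E] [PartialOrder E] [IsOrderedAddMonoid E] [Module ℝ E]
    [PosSMulMono ℝ E] {F : E → E} (hF : ∀ y, 0 ≤ y → 0 ≤ F y) (v : ι → ℝ)
    (α : ι → ι → ℝ) (hv : ∀ i, 0 ≤ v i) (hα : ∀ i j, j < i → 0 ≤ α i j) {y₀ : E}
    (hy₀ : 0 ≤ y₀) (Y : ι → E) (hY : ∀ i, Y i = v i • y₀ + ∑ j ∈ Iio i, α i j • F (Y j))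
    (i : ι) : 0 ≤ Y i := by
  induction i using WellFoundedLT.induction with
  | _ i ih =>
    rw [hY i]
    refine add_nonneg (smul_nonneg (hv i) hy₀) (sum_nonneg fun j hj => ?_)
    have hji : j < i := mem_Iio.mp hj
    exact smul_nonneg (hα i j hji) (hF _ (ih j hji))

def sirEulerStep (b c T h : ℝ) (x : ℝ × ℝ × ℝ) : ℝ × ℝ × ℝ :=
  (x.1 - h * (x.1 * T + c * x.1),
    x.2.1 + h * (x.1 * T - b * x.2.1),
    x.2.2 + h * (b * x.2.1 + c * x.1))

theorem sirEulerStep_nonneg {b c T h : ℝ} (hb : 0 ≤ b) (hc : 0 ≤ c) (hT : 0 ≤ T) (hh : 0 ≤ h)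
    (hTc : h * (T + c) ≤ 1) (hhb : h * b ≤ 1) {x : ℝ × ℝ × ℝ} (hx : 0 ≤ x) :
    0 ≤ sirEulerStep b c T h x := by
  obtain ⟨hS, hI, hR⟩ : 0 ≤ x.1 ∧ 0 ≤ x.2.1 ∧ 0 ≤ x.2.2 := ⟨hx.1, hx.2.1, hx.2.2⟩
  refine ⟨?_, ?_, ?_⟩
  · have : 0 ≤ (1 - h * (T + c)) * x.1 := mul_nonneg (sub_nonneg.mpr hTc) hS
    change 0 ≤ x.1 - h * (x.1 * T + c * x.1)
    linarith
  · have h₁ : 0 ≤ (1 - h * b) * x.2.1 := mul_nonneg (sub_nonneg.mpr hhb) hI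
    have h₂ : 0 ≤ h * (x.1 * T) := mul_nonneg hh (mul_nonneg hS hT)
    change 0 ≤ x.2.1 + h * (x.1 * T - b * x.2.1)
    linarith
  · change 0 ≤ x.2.2 + h * (b * x.2.1 + c * x.1)
    positivity

theorem stmt_13_general (s : ℕ) (v : Fin (s + 1) → ℝ) (α : Fin (s + 1) → Fin (s + 1) → ℝ)
    (hv : ∀ i, 0 ≤ v i) (hα : ∀ i j, j < i → 0 ≤ α i j)
    (b c T h : ℝ) (hb : 0 ≤ b) (hc : 0 ≤ c) (hT : 0 ≤ T) (hh : 0 < h)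
    (hcond1 : h * (T + c) ≤ 1) (hcond2 : h * b ≤ 1)
    (S₀ I₀ R₀ : ℝ) (hS₀ : 0 ≤ S₀) (hI₀ : 0 ≤ I₀) (hR₀ : 0 ≤ R₀)
    (S I R : Fin (s + 1) → ℝ)
    (hS : ∀ i, S i = v i * S₀ +
      ∑ j ∈ Finset.Iio i, α i j * (S j - h * (S j * T + c * S j)))
    (hI : ∀ i, I i = v i * I₀ +
      ∑ j ∈ Finset.Iio i, α i j * (I j + h * (S j * T - b * I j)))
    (hR : ∀ i, R i = v i * R₀ +
      ∑ j ∈ Finset.Iio i, α i j * (R j + h * (b * I j + c * S j))) :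
    ∀ i, 0 ≤ S i ∧ 0 ≤ I i ∧ 0 ≤ R i := by
  have hstages : ∀ i, (S i, I i, R i) = v i • (S₀, I₀, R₀) +
      ∑ j ∈ Iio i, α i j • sirEulerStep b c T h (S j, I j, R j) := by
    intro i
    ext <;> simp [Prod.fst_sum, Prod.snd_sum, sirEulerStep, hS i, hI i, hR i]
  have hinit : (0 : ℝ × ℝ × ℝ) ≤ (S₀, I₀, R₀) := ⟨hS₀, hI₀, hR₀⟩
  exact shuOsher_stage_nonneg (fun _ => sirEulerStep_nonneg hb hc hT hh.le hcond1 hcond2) v α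
    hv hα hinit (fun i => (S i, I i, R i)) hstages

theorem stmt_13 (s : ℕ) (v : Fin (s + 1) → ℝ) (α : Fin (s + 1) → Fin (s + 1) → ℝ)
    (hv : ∀ i, 0 ≤ v i) (hα : ∀ i j, j < i → 0 ≤ α i j)
    (hcons : ∀ i, v i + ∑ j ∈ Finset.Iio i, α i j = 1)
    (b c T h : ℝ) (hb : 0 ≤ b) (hc : 0 ≤ c) (hT : 0 ≤ T) (hh : 0 < h)
    (hcond1 : h * (T + c) ≤ 1) (hcond2 : h * b ≤ 1)
    (S₀ I₀ R₀ : ℝ) (hS₀ : 0 ≤ S₀) (hI₀ : 0 ≤ I₀) (hR₀ : 0 ≤ R₀)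
    (S I R : Fin (s + 1) → ℝ)
    (hS : ∀ i, S i = v i * S₀ +
      ∑ j ∈ Finset.Iio i, α i j * (S j - h * (S j * T + c * S j)))
    (hI : ∀ i, I i = v i * I₀ +
      ∑ j ∈ Finset.Iio i, α i j * (I j + h * (S j * T - b * I j)))
    (hR : ∀ i, R i = v i * R₀ +
      ∑ j ∈ Finset.Iio i, α i j * (R j + h * (b * I j + c * S j))) :
    ∀ i, 0 ≤ S i ∧ 0 ≤ I i ∧ 0 ≤ R i :=
  stmt_13_general s v α hv hα b c T h hb hc hT hh hcond1 hcond2 S₀ I₀ R₀ hS₀ hI₀ hR₀ S I R hS hI hR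
end

section
/- Let s be a natural number, let v : {1,…,s+1} → ℝ and α : {1,…,s+1} × {1,…,s+1} → ℝ satisfy v_i ≥ 0, α_{ij} ≥ 0 (for j < i) and v_i + Σ_{j<i} α_{ij} = 1 for every i. Let b ≥ 0, c ≥ 0, T ≥ 0, h > 0 with h·(T + c) ≤ 1 and h·b ≤ 1, and let S⁰ ≥ 0, I⁰ ≥ 0, R⁰ ≥ 0. Define the stage values S_(i), I_(i), R_(i) by S_(i) = v_i·S⁰ + Σ_{j<i} α_{ij}·(S_(j) − h·(S_(j)·T + c·S_(j))), I_(i) = v_i·I⁰ + Σ_{j<i} α_{ij}·(I_(j) + h·(S_(j)·T − b·I_(j))), R_(i) = v_i·R⁰ + Σ_{j<i} α_{ij}·(R_(j) + h·(b·I_(j) + c·S_(j))). Then S_(i) ≤ S⁰ for every i ∈ {1,…,s+1}; in particular the next time-level value S_(s+1) satisfies S_(s+1) ≤ S⁰. -/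
/-!
Each stage of a Shu–Osher scheme is a convex combination of the initial value and forward-Euler
steps of earlier stages, so any convex set that is invariant under the forward-Euler step and
contains the initial value contains every stage. For the susceptible component the Euler step is
`S ↦ (1 - h (T + c)) S`, and the step-size restriction `h (T + c) ≤ 1` makes the factor lie in
`[0, 1]`, so the interval `[0, S⁰]` is invariant.
-/

open Finset Set

theorem Convex.smul_add_sum_smul_mem {E ι : Type*} [AddCommGroup E] [Module ℝ E] {K : Set E}
    (hK : Convex ℝ K) {t : Finset ι} {v : ℝ} {w : ι → ℝ} {x : E} {z : ι → E}
    (hv : 0 ≤ v) (hw : ∀ j ∈ t, 0 ≤ w j) (hsum : v + ∑ j ∈ t, w j = 1)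
    (hx : x ∈ K) (hz : ∀ j ∈ t, z j ∈ K) :
    v • x + ∑ j ∈ t, w j • z j ∈ K := by
  have := hK.sum_mem (t := t.insertNone) (w := fun o => o.elim v w) (z := fun o => o.elim x z)
    (by rintro (_ | j) hj <;> simp_all)
    (by simpa [sum_insertNone] using hsum)
    (by rintro (_ | j) hj <;> simp_all)
  simpa [sum_insertNone] using this

theorem shuOsher_stage_mem {E ι : Type*} [AddCommGroup E] [Module ℝ E]
    [Preorder ι] [LocallyFiniteOrderBot ι] [WellFoundedLT ι] {K : Set E} (hK : Convex ℝ K)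
    {F : E → E} (hF : MapsTo F K K) {v : ι → ℝ} {α : ι → ι → ℝ}
    (hv : ∀ i, 0 ≤ v i) (hα : ∀ i j, j < i → 0 ≤ α i j)
    (hcons : ∀ i, v i + ∑ j ∈ Iio i, α i j = 1) {y₀ : E} (hy₀ : y₀ ∈ K) {y : ι → E}
    (hy : ∀ i, y i = v i • y₀ + ∑ j ∈ Iio i, α i j • F (y j)) (i : ι) :
    y i ∈ K := by
  induction i using WellFoundedLT.induction with
  | _ i ih =>
    rw [hy i]
    exact hK.smul_add_sum_smul_mem (hv i) (fun j hj => hα i j (mem_Iio.mp hj)) (hcons i) hy₀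
      fun j hj => hF (ih j (mem_Iio.mp hj))

theorem mapsTo_mul_Icc_zero {k M : ℝ} (hk₀ : 0 ≤ k) (hk₁ : k ≤ 1) :
    MapsTo (· * k) (Icc 0 M) (Icc 0 M) := fun _ ⟨hx₀, hxM⟩ =>
  ⟨mul_nonneg hx₀ hk₀, (mul_le_of_le_one_right hx₀ hk₁).trans hxM⟩

theorem stmt_14_general (s : ℕ) (v : Fin (s + 1) → ℝ) (α : Fin (s + 1) → Fin (s + 1) → ℝ)
    (hv : ∀ i, 0 ≤ v i) (hα : ∀ i j, j < i → 0 ≤ α i j)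
    (hcons : ∀ i, v i + ∑ j ∈ Finset.Iio i, α i j = 1)
    (c T h : ℝ) (hc : 0 ≤ c) (hT : 0 ≤ T) (hh : 0 < h)
    (hcond1 : h * (T + c) ≤ 1)
    (S₀ : ℝ) (hS₀ : 0 ≤ S₀)
    (S : Fin (s + 1) → ℝ)
    (hS : ∀ i, S i = v i * S₀ +
      ∑ j ∈ Finset.Iio i, α i j * (S j - h * (S j * T + c * S j))) :
    (∀ i, S i ≤ S₀) ∧ S (Fin.last s) ≤ S₀ := by
  have hstep : MapsTo (· * (1 - h * (T + c))) (Icc 0 S₀) (Icc 0 S₀) :=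
    mapsTo_mul_Icc_zero (sub_nonneg.mpr hcond1) (sub_le_self _ (by positivity))
  have hS_euler : ∀ i, S i = v i • S₀ + ∑ j ∈ Iio i, α i j • (S j * (1 - h * (T + c))) := fun i => by
    rw [hS i]
    simp only [smul_eq_mul]
    exact congrArg _ (sum_congr rfl fun j _ => by ring)
  have hmem := shuOsher_stage_mem (convex_Icc 0 S₀) hstep hv hα hcons
    (show S₀ ∈ Icc 0 S₀ from ⟨hS₀, le_rfl⟩) hS_euler
  exact ⟨fun i => (hmem i).2, (hmem _).2⟩

theorem stmt_14 (s : ℕ) (v : Fin (s + 1) → ℝ) (α : Fin (s + 1) → Fin (s + 1) → ℝ)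
    (hv : ∀ i, 0 ≤ v i) (hα : ∀ i j, j < i → 0 ≤ α i j)
    (hcons : ∀ i, v i + ∑ j ∈ Finset.Iio i, α i j = 1)
    (b c T h : ℝ) (hb : 0 ≤ b) (hc : 0 ≤ c) (hT : 0 ≤ T) (hh : 0 < h)
    (hcond1 : h * (T + c) ≤ 1) (hcond2 : h * b ≤ 1)
    (S₀ I₀ R₀ : ℝ) (hS₀ : 0 ≤ S₀) (hI₀ : 0 ≤ I₀) (hR₀ : 0 ≤ R₀)
    (S I R : Fin (s + 1) → ℝ)
    (hS : ∀ i, S i = v i * S₀ +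
      ∑ j ∈ Finset.Iio i, α i j * (S j - h * (S j * T + c * S j)))
    (hI : ∀ i, I i = v i * I₀ +
      ∑ j ∈ Finset.Iio i, α i j * (I j + h * (S j * T - b * I j)))
    (hR : ∀ i, R i = v i * R₀ +
      ∑ j ∈ Finset.Iio i, α i j * (R j + h * (b * I j + c * S j))) :
    (∀ i, S i ≤ S₀) ∧ S (Fin.last s) ≤ S₀ :=
  stmt_14_general s v α hv hα hcons c T h hc hT hh hcond1 S₀ hS₀ S hS
end

section
/- Let s be a natural number, let v : {1,…,s+1} → ℝ and α : {1,…,s+1} × {1,…,s+1} → ℝ satisfy the consistency condition v_i + Σ_{j<i} α_{ij} = 1 for every i. Let b, c, T, h ∈ ℝ and S⁰, I⁰, R⁰ ∈ ℝ be arbitrary. Define the stage values S_(i), I_(i), R_(i) by S_(i) = v_i·S⁰ + Σ_{j<i} α_{ij}·(S_(j) − h·(S_(j)·T + c·S_(j))), I_(i) = v_i·I⁰ + Σ_{j<i} α_{ij}·(I_(j) + h·(S_(j)·T − b·I_(j))), R_(i) = v_i·R⁰ + Σ_{j<i} α_{ij}·(R_(j) + h·(b·I_(j) + c·S_(j))).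 Then S_(i) + I_(i) + R_(i) = S⁰ + I⁰ + R⁰ for every i ∈ {1,…,s+1}; in particular S_(s+1) + I_(s+1) + R_(s+1) = S⁰ + I⁰ + R⁰. -/
open Finset

-- Applied to a linear invariant of the scheme, this is its conservation for any step size.
theorem shuOsher_stage_eq_initial {ι R M : Type*} [Preorder ι] [LocallyFiniteOrderBot ι]
    [WellFoundedLT ι] [Ring R] [AddCommGroup M] [Module R M]
    (v : ι → R) (α : ι → ι → R) (hcons : ∀ i, v i + ∑ j ∈ Iio i, α i j = 1)
    (u₀ : M) (u : ι → M) (hu : ∀ i, u i = v i • u₀ + ∑ j ∈ Iio i, α i j • u j) (i : ι) :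
    u i = u₀ := by
  induction i using WellFoundedLT.induction with
  | ind i ih =>
    rw [hu i, sum_congr rfl fun j hj => by rw [ih j (mem_Iio.mp hj)], ← sum_smul, ← add_smul,
      hcons i, one_smul]

theorem stmt_16 (s : ℕ) (v : Fin (s + 1) → ℝ) (α : Fin (s + 1) → Fin (s + 1) → ℝ)
    (hcons : ∀ i, v i + ∑ j ∈ Finset.Iio i, α i j = 1)
    (b c T h S₀ I₀ R₀ : ℝ)
    (S I R : Fin (s + 1) → ℝ)
    (hS : ∀ i, S i = v i * S₀ +
      ∑ j ∈ Finset.Iio i, α i j * (S j - h * (S j * T + c * S j)))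
    (hI : ∀ i, I i = v i * I₀ +
      ∑ j ∈ Finset.Iio i, α i j * (I j + h * (S j * T - b * I j)))
    (hR : ∀ i, R i = v i * R₀ +
      ∑ j ∈ Finset.Iio i, α i j * (R j + h * (b * I j + c * S j))) :
    (∀ i, S i + I i + R i = S₀ + I₀ + R₀) ∧
    S (Fin.last s) + I (Fin.last s) + R (Fin.last s) = S₀ + I₀ + R₀ := by
  -- the increments of S, I and R cancel, so the total density obeys the bare scheme
  have htotal : ∀ i, S i + I i + R i =
      v i * (S₀ + I₀ + R₀) + ∑ j ∈ Iio i, α i j * (S j + I j + R j) := by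
    intro i
    have hsplit : ∑ j ∈ Iio i, α i j * (S j + I j + R j) =
        ∑ j ∈ Iio i, α i j * (S j - h * (S j * T + c * S j)) +
        ∑ j ∈ Iio i, α i j * (I j + h * (S j * T - b * I j)) +
        ∑ j ∈ Iio i, α i j * (R j + h * (b * I j + c * S j)) := by
      rw [← sum_add_distrib, ← sum_add_distrib]
      exact sum_congr rfl fun j _ => by ring
    linear_combination hS i + hI i + hR i - hsplit
  have hconserved := shuOsher_stage_eq_initial v α hcons _ _ htotal
  exact ⟨hconserved, hconserved _⟩
end

section
/- Consider the cubature approximation of the spatial delayed SIR model: let Ω ⊂ ℝ² be a bounded open connected set, b, c, σ, δ > 0, 𝒯 > 0, W : ℝ² → ℝ continuous, nonnegative and bounded, and let w₁,…,w_p > 0 be positive weights and (η₁,ξ₁),…,(η_p,ξ_p) points of the open ball B_δ(0) ⊂ ℝ². Suppose S, I, R : [−σ, 𝒯] × ℝ² → ℝ are such that I(t,·) vanishes outside Ω for every t, the maps (t,x,y) ↦ S, I, R are continuous on [−σ, 𝒯] × Ω, and for every (x,y) ∈ Ω and t ∈ (0, 𝒯] the time derivatives exist and satisfy ∂ₜS(t,x,y)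 = −S(t,x,y)·ℱ_I(t−σ,x,y) − c·S(t,x,y), ∂ₜI(t,x,y) = S(t,x,y)·ℱ_I(t−σ,x,y) − b·I(t,x,y), ∂ₜR(t,x,y) = b·I(t,x,y) + c·S(t,x,y), where ℱ_I(t,x,y) = Σ_{i=1}^{p} w_i·W(x+η_i, y+ξ_i)·I(t, x+η_i, y+ξ_i). Assume the history satisfies, for every (x,y) ∈ Ω: S(t,x,y), I(t,x,y), R(t,x,y) ≥ 0 for all t ∈ [−σ,0]; t ↦ S(t,x,y)+I(t,x,y)+R(t,x,y) is constant on [−σ,0]; t ↦ S(t,x,y) is nonincreasing and t ↦ R(t,x,y) is nondecreasing on [−σ,0]. Then for every (x,y) ∈ Ω: S(t,x,y), I(t,x,y), R(t,x,y) ≥ 0 for all t ∈ [0,𝒯]; S(t,x,y)+I(t,x,y)+R(t,x,y) = S(0,x,y)+I(0,x,y)+R(0,x,y) for all t ∈ [0,𝒯]; t ↦ S(t,x,y) is nonincreasing on [0,𝒯]; and t ↦ R(t,x,y) is nondecreasing on [0,𝒯]. -/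
/-!
At each spatial point the system is a scalar linear ODE in time. With an integrating factor,
`f' = g f + h` and `h ≥ 0` keep `f ≥ 0`: for `S` take `h = 0`, for `I` take
`h = S · ℱ_I(t - σ)`, whose sign only involves `I` one delay earlier, so nonnegativity of `I`
propagates from the history interval `[-σ, 0]` to `[0, T]` in steps of length `σ`.
Once `S, I ≥ 0`, the signs of `∂ₜS` and `∂ₜR` are evident, and `∂ₜ(S + I + R) = 0`.
-/

open Set

lemma monotoneOn_Icc_of_hasDerivAt_nonneg {f f' : ℝ → ℝ} {a b : ℝ}
    (hf : ContinuousOn f (Icc a b)) (hf' : ∀ t ∈ Ioo a b, HasDerivAt f (f' t) t)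
    (hf'₀ : ∀ t ∈ Ioo a b, 0 ≤ f' t) : MonotoneOn f (Icc a b) :=
  monotoneOn_of_hasDerivWithinAt_nonneg (convex_Icc a b) hf
    (by simpa only [interior_Icc] using fun t ht => (hf' t ht).hasDerivWithinAt)
    (by simpa only [interior_Icc] using hf'₀)

lemma antitoneOn_Icc_of_hasDerivAt_nonpos {f f' : ℝ → ℝ} {a b : ℝ}
    (hf : ContinuousOn f (Icc a b)) (hf' : ∀ t ∈ Ioo a b, HasDerivAt f (f' t) t)
    (hf'₀ : ∀ t ∈ Ioo a b, f' t ≤ 0) : AntitoneOn f (Icc a b) :=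
  antitoneOn_of_hasDerivWithinAt_nonpos (convex_Icc a b) hf
    (by simpa only [interior_Icc] using fun t ht => (hf' t ht).hasDerivWithinAt)
    (by simpa only [interior_Icc] using hf'₀)

lemma nonneg_of_hasDerivAt_eq_mul_add {f g h : ℝ → ℝ} {a b : ℝ}
    (hf : ContinuousOn f (Icc a b)) (hg : ContinuousOn g (Icc a b))
    (hf' : ∀ t ∈ Ioo a b, HasDerivAt f (g t * f t + h t) t)
    (hh : ∀ t ∈ Ioo a b, 0 ≤ h t) (ha : 0 ≤ f a) : ∀ t ∈ Icc a b, 0 ≤ f t := by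
  intro t ht
  have hab : a ≤ b := ht.1.trans ht.2
  set G : ℝ → ℝ := fun t => ∫ s in a..t, g s
  have hG : ContinuousOn G (Icc a b) := by
    have := intervalIntegral.continuousOn_primitive_interval (a := a) (b := b)
      (μ := MeasureTheory.volume) (f := g) (by rw [uIcc_of_le hab]; exact hg.integrableOn_Icc)
    rwa [uIcc_of_le hab] at this
  have hG' : ∀ s ∈ Ioo a b, HasDerivAt G (g s) s := fun s hs =>
    intervalIntegral.integral_hasDerivAt_right
      ((hg.mono (Icc_subset_Icc_right hs.2.le)).intervalIntegrable_of_Icc hs.1.le)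
      (hg.mono Ioo_subset_Icc_self |>.stronglyMeasurableAtFilter isOpen_Ioo s hs)
      (hg.continuousAt (Icc_mem_nhds hs.1 hs.2))
  -- the integrating factor `exp (-G)` turns `f' = g f + h` into `(exp (-G) f)' = exp (-G) h`
  have hmono : MonotoneOn (fun s => Real.exp (-G s) * f s) (Icc a b) :=
    monotoneOn_Icc_of_hasDerivAt_nonneg (hG.neg.rexp.mul hf)
      (fun s hs => (((hG' s hs).neg.exp).mul (hf' s hs)).congr_deriv (by ring))
      (fun s hs => mul_nonneg (Real.exp_pos _).le (hh s hs))
  exact (mul_nonneg_iff_of_pos_left (Real.exp_pos _)).1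
    ((mul_nonneg (Real.exp_pos _).le ha).trans (hmono (left_mem_Icc.2 hab) ht ht.1))

lemma forall_of_le_of_step_Icc {P : ℝ → Prop} {a b σ : ℝ} (hσ : 0 < σ)
    (hbase : ∀ t ∈ Icc a b, P t)
    (hstep : ∀ s, b ≤ s → (∀ t ∈ Icc a s, P t) → ∀ t ∈ Icc a (s + σ), P t) :
    ∀ t, a ≤ t → P t := by
  have hsteps : ∀ n : ℕ, ∀ t ∈ Icc a (b + n * σ), P t := by
    intro n
    induction n with
    | zero => simpa using hbase
    | succ n ih =>
      have := hstep _ (le_add_of_nonneg_right (by positivity)) ih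
      rwa [Nat.cast_succ, add_one_mul, ← add_assoc]
  intro t ht
  obtain ⟨n, hn⟩ := exists_nat_ge ((t - b) / σ)
  exact hsteps n t ⟨ht, by linarith [(div_le_iff₀ hσ).1 hn]⟩

lemma delayed_infection_nonneg {E : Type*} {Ω : Set E} {b σ T : ℝ} {S I F : ℝ → E → ℝ}
    (hσ : 0 < σ) (hF : ∀ t, (∀ z, 0 ≤ I t z) → ∀ z, 0 ≤ F t z)
    (hIout : ∀ t, ∀ z ∉ Ω, I t z = 0)
    (hI : ∀ z ∈ Ω, ContinuousOn (fun t => I t z) (Icc 0 T))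
    (hI' : ∀ z ∈ Ω, ∀ t ∈ Ioo 0 T,
      HasDerivAt (fun t => I t z) (S t z * F (t - σ) z - b * I t z) t)
    (hS : ∀ z ∈ Ω, ∀ t ∈ Icc 0 T, 0 ≤ S t z)
    (hI_hist : ∀ z ∈ Ω, ∀ t ∈ Icc (-σ) 0, 0 ≤ I t z) :
    ∀ t ∈ Icc (-σ) T, ∀ z, 0 ≤ I t z := by
  have key : ∀ t, -σ ≤ t → t ≤ T → ∀ z, 0 ≤ I t z := by
    refine forall_of_le_of_step_Icc hσ (b := 0) ?_ ?_
    · intro t ht _ z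
      by_cases hz : z ∈ Ω
      · exact hI_hist z hz t ht
      · exact (hIout t z hz).ge
    intro s hs ih t ht htT z
    rcases le_or_gt t s with hts | hst
    · exact ih t ⟨ht.1, hts⟩ htT z
    by_cases hz : z ∈ Ω
    swap
    · exact (hIout t z hz).ge
    -- on `[s, t]` the delayed argument `r - σ` stays in `[-σ, s]`, where `I ≥ 0` is known
    refine nonneg_of_hasDerivAt_eq_mul_add (g := fun _ => -b)
      (h := fun r => S r z * F (r - σ) z) ((hI z hz).mono (Icc_subset_Icc hs htT))
      continuousOn_const (fun r hr => ?_) (fun r hr => ?_)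
      (ih s ⟨by linarith, le_rfl⟩ (by linarith) z) t ⟨hst.le, le_rfl⟩
    · exact (hI' z hz r ⟨hs.trans_lt hr.1, hr.2.trans_le htT⟩).congr_deriv (by ring)
    · exact mul_nonneg (hS z hz r ⟨by linarith [hr.1], by linarith [hr.2]⟩)
        (hF _ (ih _ ⟨by linarith [hr.1], by linarith [hr.2, ht.2]⟩ (by linarith [hr.2])) z)
  exact fun t ht => key t ht.1 ht.2

section Cubature

variable {E : Type*} [Add E] {p : ℕ}

def cubature (w : Fin p → ℝ) (W : E → ℝ) (η : Fin p → E) (I : ℝ → E → ℝ) (t : ℝ) (z : E) : ℝ :=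
  ∑ i, w i * W (z + η i) * I t (z + η i)

lemma cubature_nonneg {w : Fin p → ℝ} {W : E → ℝ} {η : Fin p → E} {I : ℝ → E → ℝ} {t : ℝ}
    (hw : ∀ i, 0 ≤ w i) (hW : ∀ z, 0 ≤ W z) (hI : ∀ z, 0 ≤ I t z) (z : E) :
    0 ≤ cubature w W η I t z :=
  Finset.sum_nonneg fun i _ => mul_nonneg (mul_nonneg (hw i) (hW _)) (hI _)

lemma continuousOn_cubature (w : Fin p → ℝ) (W : E → ℝ) (η : Fin p → E) {I : ℝ → E → ℝ}
    {s : Set ℝ} (hI : ∀ z, ContinuousOn (fun t => I t z) s) (z : E) :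
    ContinuousOn (fun t => cubature w W η I t z) s :=
  continuousOn_finsetSum _ fun _ _ => continuousOn_const.mul (hI _)

end Cubature

lemma sir_conserved_and_monotone {s i r k : ℝ → ℝ} {b c t₀ t₁ : ℝ} (hb : 0 ≤ b) (hc : 0 ≤ c)
    (hs : ContinuousOn s (Icc t₀ t₁)) (hi : ContinuousOn i (Icc t₀ t₁))
    (hr : ContinuousOn r (Icc t₀ t₁))
    (hs' : ∀ t ∈ Ioo t₀ t₁, HasDerivAt s (-s t * k t - c * s t) t)
    (hi' : ∀ t ∈ Ioo t₀ t₁, HasDerivAt i (s t * k t - b * i t) t)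
    (hr' : ∀ t ∈ Ioo t₀ t₁, HasDerivAt r (b * i t + c * s t) t)
    (hs₀ : ∀ t ∈ Ioo t₀ t₁, 0 ≤ s t) (hi₀ : ∀ t ∈ Ioo t₀ t₁, 0 ≤ i t)
    (hk : ∀ t ∈ Ioo t₀ t₁, 0 ≤ k t) :
    (∀ t ∈ Icc t₀ t₁, s t + i t + r t = s t₀ + i t₀ + r t₀) ∧
      AntitoneOn s (Icc t₀ t₁) ∧ MonotoneOn r (Icc t₀ t₁) := by
  have hN : ContinuousOn (fun t => s t + i t + r t) (Icc t₀ t₁) := (hs.add hi).add hr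
  have hN' : ∀ t ∈ Ioo t₀ t₁, HasDerivAt (fun t => s t + i t + r t) 0 t := fun t ht =>
    (((hs' t ht).add (hi' t ht)).add (hr' t ht)).congr_deriv (by ring)
  refine ⟨fun t ht => ?_, antitoneOn_Icc_of_hasDerivAt_nonpos hs hs' fun t ht => ?_,
    monotoneOn_Icc_of_hasDerivAt_nonneg hr hr' fun t ht => ?_⟩
  · have h₀ : t₀ ∈ Icc t₀ t₁ := ⟨le_rfl, ht.1.trans ht.2⟩
    exact le_antisymm
      (antitoneOn_Icc_of_hasDerivAt_nonpos hN hN' (fun _ _ => le_rfl) h₀ ht ht.1)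
      (monotoneOn_Icc_of_hasDerivAt_nonneg hN hN' (fun _ _ => le_rfl) h₀ ht ht.1)
  · nlinarith [hs₀ t ht, hk t ht]
  · nlinarith [hs₀ t ht, hi₀ t ht]

theorem stmt_18_general
    (Ω : Set (EuclideanSpace ℝ (Fin 2)))
    (b c σ T : ℝ) (hb : 0 < b) (hc : 0 < c) (hσ : 0 < σ)
    (W : EuclideanSpace ℝ (Fin 2) → ℝ)
    (hWnn : ∀ z, 0 ≤ W z)
    (p : ℕ) (w : Fin p → ℝ) (hw : ∀ i, 0 < w i)
    (η : Fin p → EuclideanSpace ℝ (Fin 2))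
    (S I R : ℝ → EuclideanSpace ℝ (Fin 2) → ℝ)
    (hIout : ∀ t, ∀ z ∉ Ω, I t z = 0)
    (hScont : ContinuousOn (fun q : ℝ × EuclideanSpace ℝ (Fin 2) => S q.1 q.2)
      (Set.Icc (-σ) T ×ˢ Ω))
    (hIcont : ContinuousOn (fun q : ℝ × EuclideanSpace ℝ (Fin 2) => I q.1 q.2)
      (Set.Icc (-σ) T ×ˢ Ω))
    (hRcont : ContinuousOn (fun q : ℝ × EuclideanSpace ℝ (Fin 2) => R q.1 q.2)
      (Set.Icc (-σ) T ×ˢ Ω))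
    (hdS : ∀ z ∈ Ω, ∀ t ∈ Set.Ioc 0 T,
      HasDerivWithinAt (fun t => S t z)
        (-(S t z) * (∑ i, w i * W (z + η i) * I (t - σ) (z + η i)) - c * S t z)
        (Set.Icc (-σ) T) t)
    (hdI : ∀ z ∈ Ω, ∀ t ∈ Set.Ioc 0 T,
      HasDerivWithinAt (fun t => I t z)
        (S t z * (∑ i, w i * W (z + η i) * I (t - σ) (z + η i)) - b * I t z)
        (Set.Icc (-σ) T) t)
    (hdR : ∀ z ∈ Ω, ∀ t ∈ Set.Ioc 0 T,
      HasDerivWithinAt (fun t => R t z)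
        (b * I t z + c * S t z) (Set.Icc (-σ) T) t)
    (hist_nn : ∀ z ∈ Ω, ∀ t ∈ Set.Icc (-σ) 0, 0 ≤ S t z ∧ 0 ≤ I t z ∧ 0 ≤ R t z) :
    ∀ z ∈ Ω,
      (∀ t ∈ Set.Icc 0 T, 0 ≤ S t z ∧ 0 ≤ I t z ∧ 0 ≤ R t z) ∧
      (∀ t ∈ Set.Icc 0 T, S t z + I t z + R t z = S 0 z + I 0 z + R 0 z) ∧
      AntitoneOn (fun t => S t z) (Set.Icc 0 T) ∧
      MonotoneOn (fun t => R t z) (Set.Icc 0 T) := by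
  have hsub : Icc 0 T ⊆ Icc (-σ) T := Icc_subset_Icc_left (by linarith)
  have h0 : (0 : ℝ) ∈ Icc (-σ) 0 := ⟨by linarith, le_rfl⟩
  have hderiv {f f' : ℝ → ℝ} (h : ∀ t ∈ Ioc 0 T, HasDerivWithinAt f (f' t) (Icc (-σ) T) t) :
      ∀ t ∈ Ioo 0 T, HasDerivAt f (f' t) t := fun t ht =>
    (h t (Ioo_subset_Ioc_self ht)).hasDerivAt (Icc_mem_nhds (by linarith [ht.1]) ht.2)
  have hI_cont (z) : ContinuousOn (fun t => I t z) (Icc (-σ) T) := by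
    by_cases hz : z ∈ Ω
    · exact hIcont.uncurry_right z hz
    · simpa only [hIout _ z hz] using continuousOn_const
  have hS_nonneg (z) (hz : z ∈ Ω) : ∀ t ∈ Icc 0 T, 0 ≤ S t z :=
    nonneg_of_hasDerivAt_eq_mul_add (g := fun t => -(cubature w W η I (t - σ) z + c))
      (h := fun _ => 0) ((hScont.uncurry_right z hz).mono hsub)
      (((continuousOn_cubature w W η hI_cont z).comp (continuous_sub_right σ).continuousOn
        fun t ht => ⟨by linarith [ht.1], by linarith [ht.2]⟩).add continuousOn_const).neg
      (fun t ht => (hderiv (hdS z hz) t ht).congr_deriv (by simp only [cubature]; ring))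
      (fun _ _ => le_rfl) (hist_nn z hz 0 h0).1
  have hI_nonneg : ∀ t ∈ Icc (-σ) T, ∀ z, 0 ≤ I t z :=
    delayed_infection_nonneg (F := cubature w W η I) hσ
      (fun _ => cubature_nonneg (fun i => (hw i).le) hWnn) hIout
      (fun z _ => (hI_cont z).mono hsub) (fun z hz => hderiv (hdI z hz)) hS_nonneg
      (fun z hz t ht => (hist_nn z hz t ht).2.1)
  intro z hz
  obtain ⟨hsum, hS_anti, hR_mono⟩ := sir_conserved_and_monotone hb.le hc.le
    (k := fun t => cubature w W η I (t - σ) z) ((hScont.uncurry_right z hz).mono hsub)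
    ((hI_cont z).mono hsub) ((hRcont.uncurry_right z hz).mono hsub)
    (hderiv (hdS z hz)) (hderiv (hdI z hz)) (hderiv (hdR z hz))
    (fun t ht => hS_nonneg z hz t (Ioo_subset_Icc_self ht))
    (fun t ht => hI_nonneg t (hsub (Ioo_subset_Icc_self ht)) z)
    (fun t ht => cubature_nonneg (fun i => (hw i).le) hWnn
      (hI_nonneg (t - σ) ⟨by linarith [ht.1], by linarith [ht.2]⟩) z)
  refine ⟨fun t ht => ⟨hS_nonneg z hz t ht, hI_nonneg t (hsub ht) z,
    (hist_nn z hz 0 h0).2.2.trans (hR_mono ⟨le_rfl, ht.1.trans ht.2⟩ ht ht.1)⟩,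
    hsum, hS_anti, hR_mono⟩

theorem stmt_18
    (Ω : Set (EuclideanSpace ℝ (Fin 2)))
    (hΩo : IsOpen Ω) (hΩb : Bornology.IsBounded Ω) (hΩc : IsConnected Ω)
    (b c σ δ T : ℝ) (hb : 0 < b) (hc : 0 < c) (hσ : 0 < σ) (hδ : 0 < δ) (hT : 0 < T)
    (W : EuclideanSpace ℝ (Fin 2) → ℝ)
    (hWc : Continuous W) (hWnn : ∀ z, 0 ≤ W z) (hWb : ∃ C, ∀ z, W z ≤ C)
    (p : ℕ) (w : Fin p → ℝ) (hw : ∀ i, 0 < w i)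
    (η : Fin p → EuclideanSpace ℝ (Fin 2))
    (hη : ∀ i, η i ∈ Metric.ball (0 : EuclideanSpace ℝ (Fin 2)) δ)
    (S I R : ℝ → EuclideanSpace ℝ (Fin 2) → ℝ)
    (hIout : ∀ t, ∀ z ∉ Ω, I t z = 0)
    (hScont : ContinuousOn (fun q : ℝ × EuclideanSpace ℝ (Fin 2) => S q.1 q.2)
      (Set.Icc (-σ) T ×ˢ Ω))
    (hIcont : ContinuousOn (fun q : ℝ × EuclideanSpace ℝ (Fin 2) => I q.1 q.2)
      (Set.Icc (-σ) T ×ˢ Ω))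
    (hRcont : ContinuousOn (fun q : ℝ × EuclideanSpace ℝ (Fin 2) => R q.1 q.2)
      (Set.Icc (-σ) T ×ˢ Ω))
    (hdS : ∀ z ∈ Ω, ∀ t ∈ Set.Ioc 0 T,
      HasDerivWithinAt (fun t => S t z)
        (-(S t z) * (∑ i, w i * W (z + η i) * I (t - σ) (z + η i)) - c * S t z)
        (Set.Icc (-σ) T) t)
    (hdI : ∀ z ∈ Ω, ∀ t ∈ Set.Ioc 0 T,
      HasDerivWithinAt (fun t => I t z)
        (S t z * (∑ i, w i * W (z + η i) * I (t - σ) (z + η i)) - b * I t z)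
        (Set.Icc (-σ) T) t)
    (hdR : ∀ z ∈ Ω, ∀ t ∈ Set.Ioc 0 T,
      HasDerivWithinAt (fun t => R t z)
        (b * I t z + c * S t z) (Set.Icc (-σ) T) t)
    (hist_nn : ∀ z ∈ Ω, ∀ t ∈ Set.Icc (-σ) 0, 0 ≤ S t z ∧ 0 ≤ I t z ∧ 0 ≤ R t z)
    (hist_sum : ∀ z ∈ Ω, ∀ t ∈ Set.Icc (-σ) 0,
      S t z + I t z + R t z = S 0 z + I 0 z + R 0 z)
    (hist_S : ∀ z ∈ Ω, AntitoneOn (fun t => S t z) (Set.Icc (-σ) 0))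
    (hist_R : ∀ z ∈ Ω, MonotoneOn (fun t => R t z) (Set.Icc (-σ) 0)) :
    ∀ z ∈ Ω,
      (∀ t ∈ Set.Icc 0 T, 0 ≤ S t z ∧ 0 ≤ I t z ∧ 0 ≤ R t z) ∧
      (∀ t ∈ Set.Icc 0 T, S t z + I t z + R t z = S 0 z + I 0 z + R 0 z) ∧
      AntitoneOn (fun t => S t z) (Set.Icc 0 T) ∧
      MonotoneOn (fun t => R t z) (Set.Icc 0 T) :=
  stmt_18_general Ω b c σ T hb hc hσ W hWnn p w hw η S I R hIout hScont hIcont hRcont hdS hdI hdR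
    hist_nn
end
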